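/- Fix p, K ∈ [1,∞) and n ∈ ℕ. Suppose (X,d_X) is a p-barycentric metric space with constant K via a barycenter map B. Then for every symmetric stochastic matrix A = (a_{ij}) ∈ M_n(ℝ) with γ₊(A,d_X^p) < ∞ and every f ∈ L_p^n(X): d_{L_p^n(X)}((A⊗I_X^n)(f), B(f)) ≤ ((K^{2p}γ₊(A,d_X^p) − 1)/(K^{2p}γ₊(A,d_X^p) + K^p))^{1/p}·d_{L_p^n(X)}(f, B(f)). -/

import Mathlib

open scoped BigOperators ENNReal
open scoped Classical

noncomputable section

/-- A finitely supported probability measure on `X`. -/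
structure FinProb (X : Type*) where
  w : X →₀ ℝ
  nonneg : ∀ x, 0 ≤ w x
  total : w.sum (fun _ r => r) = 1

namespace FinProb

/-- The Dirac point mass at `x`. -/
def dirac {X : Type*} (x : X) : FinProb X where
  w := Finsupp.single x 1
  nonneg := fun y => by
    rw [Finsupp.single_apply]
    split <;> norm_num
  total := Finsupp.sum_single_index rfl

/-- The probability measure `∑ i, w i • δ_{Z i}` for nonnegative weights summing to 1. -/
def mix {ι X : Type*} [Fintype ι] (w : ι → ℝ) (Z : ι → X)
    (hw : ∀ i, 0 ≤ w i) (h1 : ∑ i, w i = 1) : FinProb X where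
  w := ∑ i, Finsupp.single (Z i) (w i)
  nonneg := fun x => by
    rw [Finset.sum_apply']
    refine Finset.sum_nonneg fun i _ => ?_
    rw [Finsupp.single_apply]
    split
    · exact hw i
    · exact le_rfl
  total := by
    rw [← Finsupp.sum_finset_sum_index (fun _ => rfl) (fun _ _ _ => rfl)]
    have h : ∀ i ∈ (Finset.univ : Finset ι),
        (Finsupp.single (Z i) (w i)).sum (fun _ r => r) = w i :=
      fun i _ => Finsupp.sum_single_index rfl
    rw [Finset.sum_congr rfl h]
    exact h1

/-- `mix` with normalization of the weights. -/
def mixN {ι X : Type*} [Fintype ι] (w : ι → ℝ) (Z : ι → X)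
    (hw : ∀ i, 0 ≤ w i) (hpos : 0 < ∑ i, w i) : FinProb X :=
  mix (fun i => w i / ∑ j, w j) Z
    (fun i => div_nonneg (hw i) hpos.le)
    (by rw [← Finset.sum_div, div_self (ne_of_gt hpos)])

/-- Integral of `f : X → ℝ` against `μ`. -/
def exp {X : Type*} (μ : FinProb X) (f : X → ℝ) : ℝ :=
  μ.w.sum fun x r => r * f x

end FinProb

/-- `π` is a coupling of `μ` and `ν`. -/
def IsCoupling {X : Type*} (π : FinProb (X × X)) (μ ν : FinProb X) : Prop :=
  (∀ x : X, (π.w.sum fun q r => if q.1 = x then r else 0) = μ.w x) ∧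
  (∀ y : X, (π.w.sum fun q r => if q.2 = y then r else 0) = ν.w y)

/-- The Wasserstein `p` distance between finitely supported probability measures. -/
def wassersteinDist {X : Type*} [MetricSpace X] (p : ℝ) (μ ν : FinProb X) : ℝ :=
  sInf {c : ℝ | ∃ π : FinProb (X × X), IsCoupling π μ ν ∧
    c = (π.exp fun q => dist q.1 q.2 ^ p) ^ p⁻¹}

/-- A barycenter map sends Dirac masses to their base points. -/
def IsBarycenterMap {X : Type*} (bary : FinProb X → X) : Prop :=
  ∀ x : X, bary (FinProb.dirac x) = x

/-- `X` is `W_p` barycentric with constant `Γ` via the barycenter map `bary`. -/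
def IsWBarycentric {X : Type*} [MetricSpace X] (p Γ : ℝ) (bary : FinProb X → X) : Prop :=
  IsBarycenterMap bary ∧
    ∀ μ ν : FinProb X, dist (bary μ) (bary ν) ≤ Γ * wassersteinDist p μ ν

/-- `X` is `p`-barycentric with constant `K` via the map `bary`. -/
def IsPBarycentric {X : Type*} [MetricSpace X] (p K : ℝ) (bary : FinProb X → X) : Prop :=
  ∀ (x : X) (μ : FinProb X),
    dist x (bary μ) ^ p + K ^ (-p) * (μ.exp fun y => dist (bary μ) y ^ p)
      ≤ μ.exp fun y => dist x y ^ p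

/-- A (possibly rectangular) matrix is stochastic if it has nonnegative entries and
each row sums to `1`. -/
def IsStochastic {n m : ℕ} (A : Matrix (Fin n) (Fin m) ℝ) : Prop :=
  (∀ i j, 0 ≤ A i j) ∧ ∀ i, ∑ j, A i j = 1

/-- `A` is reversible relative to the probability vector `π`. -/
def IsReversible {n : ℕ} (A : Matrix (Fin n) (Fin n) ℝ) (π : Fin n → ℝ) : Prop :=
  ∀ i j, π i * A i j = π j * A j i

/-- `π` is a probability vector. -/
def IsProbVec {n : ℕ} (π : Fin n → ℝ) : Prop :=
  (∀ i, 0 ≤ π i) ∧ ∑ i, π i = 1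

/-- The Cesàro average `𝒜_t(A) = (1/t) ∑_{s=1}^t A^s`. -/
def cesaro {n : ℕ} (A : Matrix (Fin n) (Fin n) ℝ) (t : ℕ) : Matrix (Fin n) (Fin n) ℝ :=
  (t : ℝ)⁻¹ • ∑ s ∈ Finset.Icc 1 t, A ^ s

/-- `X` has Markov type `p` with constant `M`. -/
def HasMarkovType (X : Type*) [MetricSpace X] (p M : ℝ) : Prop :=
  ∀ (n t : ℕ), 0 < n → 0 < t → ∀ (π : Fin n → ℝ) (A : Matrix (Fin n) (Fin n) ℝ),
    IsProbVec π → IsStochastic A → IsReversible A π → ∀ x : Fin n → X,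
      ∑ i, ∑ j, π i * (A ^ t) i j * dist (x i) (x j) ^ p ≤
        M ^ p * t * ∑ i, ∑ j, π i * A i j * dist (x i) (x j) ^ p

/-- `X` has metric Markov cotype `p` with constant `N`. -/
def HasMetricMarkovCotype (X : Type*) [MetricSpace X] (p N : ℝ) : Prop :=
  ∀ (n t : ℕ), 0 < n → 0 < t → ∀ (π : Fin n → ℝ) (A : Matrix (Fin n) (Fin n) ℝ),
    IsProbVec π → IsStochastic A → IsReversible A π → ∀ x : Fin n → X,
      ∃ y : Fin n → X,
        (∑ i, π i * dist (x i) (y i) ^ p) +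
          t * ∑ i, ∑ j, π i * A i j * dist (y i) (y j) ^ p ≤
        N ^ p * ∑ i, ∑ j, π i * cesaro A t i j * dist (x i) (x j) ^ p

/-- The Markov type `p` constant `M_p(X)`. -/
def markovTypeConst (X : Type*) [MetricSpace X] (p : ℝ) : ℝ :=
  sInf {M : ℝ | 0 < M ∧ HasMarkovType X p M}

/-- The metric Markov cotype `p` constant `N_p(X)`. -/
def markovCotypeConst (X : Type*) [MetricSpace X] (p : ℝ) : ℝ :=
  sInf {N : ℝ | 0 < N ∧ HasMetricMarkovCotype X p N}

/-- The nonlinear spectral gap quantity `γ₊(A, d_X^p)`. -/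
def gammaPlus (X : Type*) [MetricSpace X] {n : ℕ} (A : Matrix (Fin n) (Fin n) ℝ)
    (p : ℝ) : ℝ≥0∞ :=
  sInf {g : ℝ≥0∞ | ∀ x y : Fin n → X,
    ENNReal.ofReal (((n : ℝ) ^ 2)⁻¹ * ∑ i, ∑ j, dist (x i) (y j) ^ p) ≤
      (g / (n : ℝ≥0∞)) * ENNReal.ofReal (∑ i, ∑ j, A i j * dist (x i) (y j) ^ p)}

/-- The metric of `L_p^n(X)`. -/
def dLpn {X : Type*} [MetricSpace X] (p : ℝ) {n : ℕ} (f g : Fin n → X) : ℝ :=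
  ((n : ℝ)⁻¹ * ∑ i, dist (f i) (g i) ^ p) ^ p⁻¹

/-- The barycenter `B(f) = B((1/n) ∑ δ_{f(i)})` of `f : Fin n → X`. -/
def baryFun {X : Type*} [MetricSpace X] (bary : FinProb X → X) {n : ℕ} (hn : 0 < n)
    (f : Fin n → X) : X :=
  bary (FinProb.mixN (fun _ : Fin n => 1) f (fun _ => zero_le_one)
    (by
      simp only [Finset.sum_const, Finset.card_univ, Fintype.card_fin, nsmul_eq_mul, mul_one]
      exact_mod_cast hn))

/-- The nonlinear action `(A ⊗ I_X^n)(f)(i) = B(∑_j a_{ij} δ_{f(j)})`. -/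
def matAct {X : Type*} [MetricSpace X] (bary : FinProb X → X) {n : ℕ}
    (A : Matrix (Fin n) (Fin n) ℝ) (hA : IsStochastic A) (f : Fin n → X) : Fin n → X :=
  fun i => bary (FinProb.mix (fun j => A i j) f (fun j => hA.1 i j) (hA.2 i))

/-- The quantity `λ_p(T)`. -/
def lambdaP {X : Type*} [MetricSpace X] (p : ℝ) {n : ℕ} (hn : 0 < n)
    (bary : FinProb X → X) (T : (Fin n → X) → (Fin n → X)) : ℝ≥0∞ :=
  sInf {l : ℝ≥0∞ | ∀ f : Fin n → X,
    ENNReal.ofReal (dLpn p (T f) (fun _ => baryFun bary hn (T f))) ≤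
      l * ENNReal.ofReal (dLpn p f (fun _ => baryFun bary hn f))}

/-- A finite σ-algebra on a finite set `Ω`, described by its atoms. -/
structure FinPartition (Ω : Type*) [Fintype Ω] where
  atom : Ω → Finset Ω
  mem_atom : ∀ ω, ω ∈ atom ω
  atom_eq : ∀ ω ω', ω' ∈ atom ω → atom ω' = atom ω

/-- The conditional barycenter `B(Z | F)`. -/
def condBary {Ω X : Type*} [Fintype Ω] (bary : FinProb X → X)
    (μ : Ω → ℝ) (hμ : ∀ ω, 0 < μ ω) (F : FinPartition Ω) (Z : Ω → X) : Ω → X :=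
  fun ω => bary (FinProb.mixN (fun a : {a // a ∈ F.atom ω} => μ a) (fun a => Z a)
    (fun a => (hμ a).le)
    (Finset.sum_pos (fun a _ => hμ a) ⟨⟨ω, F.mem_atom ω⟩, Finset.mem_univ _⟩))

/-!
Write `y = (A ⊗ I_X^n)(f)`, `b = B(f)`, `L = ∑ᵢ d(yᵢ, b)^p`, `E = ∑ᵢ d(fᵢ, b)^p` and
`S = ∑ᵢⱼ aᵢⱼ d(yᵢ, fⱼ)^p`. The `p`-barycentric inequality for the row measures `∑ⱼ aᵢⱼ δ_{fⱼ}`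
with base point `b`, summed over `i` (the columns of `A` sum to `1`), gives `L + K^{-p} S ≤ E`.
The same inequality for the uniform measure on the `fⱼ` with base points `yᵢ`, combined with the
definition of `γ₊`, gives `L + K^{-p} E ≤ γ₊ S`. Eliminating `S` bounds `L / E`.
-/

namespace FinProb

theorem exp_mix {ι X : Type*} [Fintype ι] (w : ι → ℝ) (Z : ι → X) (hw : ∀ i, 0 ≤ w i)
    (h1 : ∑ i, w i = 1) (F : X → ℝ) :
    (mix w Z hw h1).exp F = ∑ i, w i * F (Z i) := by
  rw [exp, mix, ← Finsupp.sum_finsetSum_index (fun a => zero_mul (F a))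
    (fun a b₁ b₂ => add_mul b₁ b₂ (F a))]
  exact Finset.sum_congr rfl fun i _ => Finsupp.sum_single_index (zero_mul _)

theorem exp_mixN {ι X : Type*} [Fintype ι] (w : ι → ℝ) (Z : ι → X) (hw : ∀ i, 0 ≤ w i)
    (hpos : 0 < ∑ i, w i) (F : X → ℝ) :
    (mixN w Z hw hpos).exp F = (∑ i, w i * F (Z i)) / ∑ i, w i := by
  rw [mixN, exp_mix, Finset.sum_div]
  exact Finset.sum_congr rfl fun i _ => div_mul_eq_mul_div _ _ _

end FinProb

section

variable {X : Type*} [MetricSpace X] {n : ℕ}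

theorem ofReal_le_gammaPlus_div_mul {A : Matrix (Fin n) (Fin n) ℝ} {p : ℝ} (hn : 0 < n)
    (hγ : gammaPlus X A p ≠ ⊤) (x y : Fin n → X) :
    ENNReal.ofReal (((n : ℝ) ^ 2)⁻¹ * ∑ i, ∑ j, dist (x i) (y j) ^ p) ≤
      gammaPlus X A p / n * ENNReal.ofReal (∑ i, ∑ j, A i j * dist (x i) (y j) ^ p) := by
  set S := {g : ℝ≥0∞ | ∀ x y : Fin n → X,
    ENNReal.ofReal (((n : ℝ) ^ 2)⁻¹ * ∑ i, ∑ j, dist (x i) (y j) ^ p) ≤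
      (g / (n : ℝ≥0∞)) * ENNReal.ofReal (∑ i, ∑ j, A i j * dist (x i) (y j) ^ p)}
  have hγS : sInf S ≠ ⊤ := hγ
  have : Nonempty S :=
    Set.Nonempty.to_subtype <| Set.nonempty_iff_ne_empty.2 fun hS => hγS (by rw [hS, sInf_empty])
  change _ ≤ sInf S / n * _
  rw [sInf_eq_iInf', ENNReal.iInf_div_of_ne (by exact_mod_cast hn.ne') (ENNReal.natCast_ne_top n),
    ENNReal.iInf_mul fun h => absurd h ENNReal.ofReal_ne_top]
  exact le_iInf fun g => g.2 x y

theorem inv_mul_sum_dist_le_gammaPlus_mul {A : Matrix (Fin n) (Fin n) ℝ} {p : ℝ} (hn : 0 < n)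
    (hA : ∀ i j, 0 ≤ A i j) (hγ : gammaPlus X A p ≠ ⊤) (x y : Fin n → X) :
    (n : ℝ)⁻¹ * ∑ i, ∑ j, dist (x i) (y j) ^ p ≤
      (gammaPlus X A p).toReal * ∑ i, ∑ j, A i j * dist (x i) (y j) ^ p := by
  have hn' : (0 : ℝ) < n := by exact_mod_cast hn
  have hS : 0 ≤ ∑ i, ∑ j, A i j * dist (x i) (y j) ^ p :=
    Finset.sum_nonneg fun i _ => Finset.sum_nonneg fun j _ => mul_nonneg (hA i j) (by positivity)
  have h := ENNReal.toReal_mono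
    (ENNReal.mul_ne_top (ENNReal.div_ne_top hγ (by exact_mod_cast hn.ne')) ENNReal.ofReal_ne_top)
    (ofReal_le_gammaPlus_div_mul hn hγ x y)
  rw [ENNReal.toReal_ofReal (by positivity), ENNReal.toReal_mul, ENNReal.toReal_ofReal hS,
    ENNReal.toReal_div, ENNReal.toReal_natCast] at h
  calc (n : ℝ)⁻¹ * ∑ i, ∑ j, dist (x i) (y j) ^ p
      = n * (((n : ℝ) ^ 2)⁻¹ * ∑ i, ∑ j, dist (x i) (y j) ^ p) := by field_simp
    _ ≤ n * ((gammaPlus X A p).toReal / n * ∑ i, ∑ j, A i j * dist (x i) (y j) ^ p) := by gcongr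
    _ = _ := by field_simp

/-- No sign condition on `r` is needed: if the right-hand sum vanishes, so does the left-hand one,
and otherwise `0 ≤ r`. -/
theorem dLpn_le_rpow_mul_of_sum_le {p r : ℝ} (hp : 0 < p) {f g f' g' : Fin n → X}
    (h : ∑ i, dist (f i) (g i) ^ p ≤ r * ∑ i, dist (f' i) (g' i) ^ p) :
    dLpn p f g ≤ r ^ p⁻¹ * dLpn p f' g' := by
  have hL : 0 ≤ ∑ i, dist (f i) (g i) ^ p := by positivity
  have hE : 0 ≤ ∑ i, dist (f' i) (g' i) ^ p := by positivity
  unfold dLpn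
  rcases hE.eq_or_lt with hE0 | hEpos
  · rw [← hE0, mul_zero] at h
    rw [le_antisymm h hL, ← hE0, mul_zero, Real.zero_rpow (inv_ne_zero hp.ne'), mul_zero]
  · have hr : 0 ≤ r := nonneg_of_mul_nonneg_left (hL.trans h) hEpos
    rw [← Real.mul_rpow hr (by positivity)]
    refine Real.rpow_le_rpow (by positivity) ?_ (inv_nonneg.2 hp.le)
    calc (n : ℝ)⁻¹ * ∑ i, dist (f i) (g i) ^ p
        ≤ (n : ℝ)⁻¹ * (r * ∑ i, dist (f' i) (g' i) ^ p) := by gcongr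
      _ = r * ((n : ℝ)⁻¹ * ∑ i, dist (f' i) (g' i) ^ p) := by ring

variable {p K : ℝ} {bary : FinProb X → X}

theorem IsPBarycentric.sum_dist_matAct_add_le (hP : IsPBarycentric p K bary)
    {A : Matrix (Fin n) (Fin n) ℝ} (hA : IsStochastic A) (hcol : ∀ j, ∑ i, A i j = 1)
    (f : Fin n → X) (x : X) :
    ∑ i, dist (matAct bary A hA f i) x ^ p +
        K ^ (-p) * ∑ i, ∑ j, A i j * dist (matAct bary A hA f i) (f j) ^ p ≤
      ∑ j, dist (f j) x ^ p := by
  have hrow : ∀ i, dist (matAct bary A hA f i) x ^ p +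
      K ^ (-p) * ∑ j, A i j * dist (matAct bary A hA f i) (f j) ^ p ≤
        ∑ j, A i j * dist (f j) x ^ p := by
    intro i
    have h := hP x (FinProb.mix (fun j => A i j) f (hA.1 i) (hA.2 i))
    rw [FinProb.exp_mix, FinProb.exp_mix] at h
    simp only [dist_comm x] at h
    exact h
  calc _ = ∑ i, (dist (matAct bary A hA f i) x ^ p +
        K ^ (-p) * ∑ j, A i j * dist (matAct bary A hA f i) (f j) ^ p) := by
        rw [Finset.sum_add_distrib, Finset.mul_sum]
    _ ≤ ∑ i, ∑ j, A i j * dist (f j) x ^ p := Finset.sum_le_sum fun i _ => hrow i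
    _ = ∑ j, dist (f j) x ^ p := by
        rw [Finset.sum_comm]
        simp only [← Finset.sum_mul, hcol, one_mul]

theorem IsPBarycentric.sum_dist_baryFun_add_le (hP : IsPBarycentric p K bary) (hn : 0 < n)
    (f x : Fin n → X) :
    ∑ i, dist (x i) (baryFun bary hn f) ^ p +
        K ^ (-p) * ∑ j, dist (f j) (baryFun bary hn f) ^ p ≤
      (n : ℝ)⁻¹ * ∑ i, ∑ j, dist (x i) (f j) ^ p := by
  have hn' : (n : ℝ) ≠ 0 := by exact_mod_cast hn.ne'
  have hpoint : ∀ i, dist (x i) (baryFun bary hn f) ^ p +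
      K ^ (-p) * ((∑ j, dist (f j) (baryFun bary hn f) ^ p) / n) ≤
        (∑ j, dist (x i) (f j) ^ p) / n := by
    intro i
    have h := hP (x i) (FinProb.mixN (fun _ : Fin n => 1) f (fun _ => zero_le_one)
      (by simpa using hn))
    simp only [FinProb.exp_mixN, one_mul, Finset.sum_const, Finset.card_univ, Fintype.card_fin,
      nsmul_eq_mul, mul_one] at h
    simp only [dist_comm (bary _)] at h
    exact h
  calc _ = ∑ i, (dist (x i) (baryFun bary hn f) ^ p +
        K ^ (-p) * ((∑ j, dist (f j) (baryFun bary hn f) ^ p) / n)) := by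
        rw [Finset.sum_add_distrib, Finset.sum_const, Finset.card_univ, Fintype.card_fin,
          nsmul_eq_mul]
        field_simp
    _ ≤ ∑ i, (∑ j, dist (x i) (f j) ^ p) / n := Finset.sum_le_sum fun i _ => hpoint i
    _ = _ := by rw [← Finset.sum_div, inv_mul_eq_div]

end

theorem le_div_mul_of_add_inv_mul_le {q g L E S : ℝ} (hq : 0 < q) (hg : 0 ≤ g)
    (h₁ : L + q⁻¹ * S ≤ E) (h₂ : L + q⁻¹ * E ≤ g * S) :
    L ≤ (q * q * g - 1) / (q * q * g + q) * E := by
  have h₁' : q * L + S ≤ q * E := by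
    have := mul_le_mul_of_nonneg_left h₁ hq.le
    rwa [mul_add, ← mul_assoc, mul_inv_cancel₀ hq.ne', one_mul] at this
  have h₂' : q * L + E ≤ q * g * S := by
    have := mul_le_mul_of_nonneg_left h₂ hq.le
    rwa [mul_add, ← mul_assoc, mul_inv_cancel₀ hq.ne', one_mul, ← mul_assoc] at this
  rw [div_mul_eq_mul_div, le_div_iff₀ (by positivity)]
  nlinarith [mul_le_mul_of_nonneg_left h₁' (mul_nonneg hq.le hg)]

theorem statement15_general (p K : ℝ) (hp : 1 ≤ p) (hK : 1 ≤ K) (n : ℕ) (hn : 0 < n)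
    (X : Type*) [MetricSpace X] (bary : FinProb X → X)
    (hP : IsPBarycentric p K bary)
    (A : Matrix (Fin n) (Fin n) ℝ) (hA : IsStochastic A) (hsymm : A.IsSymm)
    (hγ : gammaPlus X A p ≠ ⊤) (f : Fin n → X) :
    dLpn p (matAct bary A hA f) (fun _ => baryFun bary hn f) ≤
      ((K ^ (2 * p) * (gammaPlus X A p).toReal - 1) /
        (K ^ (2 * p) * (gammaPlus X A p).toReal + K ^ p)) ^ p⁻¹ *
      dLpn p f (fun _ => baryFun bary hn f) := by
  have hK0 : 0 < K := one_pos.trans_le hK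
  have hcol : ∀ j, ∑ i, A i j = 1 := fun j => by
    simpa only [hsymm.apply] using hA.2 j
  have h₁ := hP.sum_dist_matAct_add_le hA hcol f (baryFun bary hn f)
  have h₂ := (hP.sum_dist_baryFun_add_le hn f (matAct bary A hA f)).trans
    (inv_mul_sum_dist_le_gammaPlus_mul hn hA.1 hγ _ f)
  rw [Real.rpow_neg hK0.le] at h₁ h₂
  rw [two_mul, Real.rpow_add hK0]
  exact dLpn_le_rpow_mul_of_sum_le (one_pos.trans_le hp)
    (le_div_mul_of_add_inv_mul_le (Real.rpow_pos_of_pos hK0 p) ENNReal.toReal_nonneg h₁ h₂)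

theorem statement15 (p K : ℝ) (hp : 1 ≤ p) (hK : 1 ≤ K) (n : ℕ) (hn : 0 < n)
    (X : Type*) [MetricSpace X] (bary : FinProb X → X)
    (hBary : IsBarycenterMap bary) (hP : IsPBarycentric p K bary)
    (A : Matrix (Fin n) (Fin n) ℝ) (hA : IsStochastic A) (hsymm : A.IsSymm)
    (hγ : gammaPlus X A p ≠ ⊤) (f : Fin n → X) :
    dLpn p (matAct bary A hA f) (fun _ => baryFun bary hn f) ≤
      ((K ^ (2 * p) * (gammaPlus X A p).toReal - 1) /
        (K ^ (2 * p) * (gammaPlus X A p).toReal + K ^ p)) ^ p⁻¹ *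
      dLpn p f (fun _ => baryFun bary hn f) :=
  statement15_general p K hp hK n hn X bary hP A hA hsymm hγ f
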